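/- Let a < b, B a Banach space, F ∈ C([a,b], B) with F(a) = F(b) = 0, and extend F by zero outside [a,b]. If F is differentiable on (a, b) with ‖F'(ω)‖ ≤ M (ω − a)^{-1/2} near a and F' integrable on (a, b), then the extended F is absolutely continuous on ℝ with derivative in L¹(ℝ; B), and ∫_ℝ e^{-itω} F(ω) dω = (it)^{-1} ∫_ℝ e^{-itω} F'(ω) dω for all t ≠ 0. -/

import Mathlib

/-!
Away from `a` and `b` the zero extension of `F` is differentiable with derivative
`𝟙_(a,b) F'`: inside `(a, b)` by assumption, outside `[a, b]` because it vanishes near the point.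
Two points form a countable set, which the fundamental theorem of calculus tolerates, so `F` is
the primitive of its integrable derivative. The same theorem applied to `ω ↦ e^{-itω} F(ω)` on
large intervals, whose compact support kills the boundary terms, shows that its derivative has
integral zero over `ℝ`; this is the integration by parts.
-/

open MeasureTheory Set Filter Complex

section Derivative

variable {E : Type*} [NormedAddCommGroup E] [NormedSpace ℝ E]

theorem hasDerivAt_indicator_Ioo_of_notMem_pair {a b : ℝ} {F F' : ℝ → E}
    (hsupp : ∀ ω ∉ Icc a b, F ω = 0) (hd : ∀ ω ∈ Ioo a b, HasDerivAt F (F' ω) ω)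
    {ω : ℝ} (hω : ω ∉ ({a, b} : Set ℝ)) :
    HasDerivAt F ((Ioo a b).indicator F' ω) ω := by
  by_cases hωab : ω ∈ Ioo a b
  · rw [indicator_of_mem hωab]
    exact hd ω hωab
  · have hωIcc : ω ∉ Icc a b := fun h =>
      hωab (Icc_sdiff_both (a := a) (b := b) ▸ ⟨h, hω⟩)
    have hF0 : F =ᶠ[nhds ω] fun _ => 0 :=
      mem_of_superset (isClosed_Icc.isOpen_compl.mem_nhds hωIcc) fun x hx => hsupp x hx
    rw [indicator_of_notMem hωab]
    exact (hasDerivAt_const ω (0 : E)).congr_of_eventuallyEq hF0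

theorem integral_eq_zero_of_hasDerivAt_off_countable [CompleteSpace E] {h h' : ℝ → E}
    {s : Set ℝ} (hs : s.Countable) (hc : Continuous h) (hh : HasCompactSupport h)
    (hd : ∀ x ∉ s, HasDerivAt h (h' x) x) (hi : Integrable h') :
    ∫ x, h' x = 0 := by
  have hlim : Tendsto (fun R : ℝ => ∫ x in -R..R, h' x) atTop (nhds (∫ x, h' x)) :=
    intervalIntegral_tendsto_integral hi tendsto_neg_atTop_atBot tendsto_id
  have hzero : h =ᶠ[Filter.cocompact ℝ] 0 :=
    mem_of_superset hh.isCompact.compl_mem_cocompact fun _ hx =>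
      image_eq_zero_of_notMem_tsupport hx
  refine tendsto_nhds_unique hlim (tendsto_const_nhds.congr' ?_)
  filter_upwards [tendsto_neg_atTop_atBot.eventually (hzero.filter_mono atBot_le_cocompact),
    hzero.filter_mono atTop_le_cocompact] with R hR hR'
  rw [integral_eq_of_hasDerivAt_off_countable h h' hs hc.continuousOn
    (fun x hx => hd x hx.2) hi.intervalIntegrable, hR, hR', Pi.zero_apply, Pi.zero_apply,
    sub_zero]

end Derivative

section Fourier

variable {B : Type*} [NormedAddCommGroup B] [NormedSpace ℂ B]

theorem hasDerivAt_cexp_neg_I_mul (t ω : ℝ) :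
    HasDerivAt (fun ω : ℝ => exp (-I * t * ω)) (-I * t * exp (-I * t * ω)) ω := by
  simpa [mul_comm] using ((hasDerivAt_id ω).ofReal_comp.const_mul (-I * t)).cexp

theorem norm_cexp_neg_I_mul (t ω : ℝ) : ‖exp (-I * t * ω)‖ = 1 := by
  simp [norm_exp]

theorem MeasureTheory.Integrable.cexp_neg_I_mul_smul {F : ℝ → B} (hF : Integrable F) (t : ℝ) :
    Integrable fun ω : ℝ => exp (-I * t * ω) • F ω :=
  hF.bdd_smul 1 (by fun_prop) (.of_forall fun ω => (norm_cexp_neg_I_mul t ω).le)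

theorem integral_cexp_neg_I_mul_smul_eq_inv_smul_of_hasDerivAt_off_countable
    [CompleteSpace B] {F g : ℝ → B} {s : Set ℝ} (hs : s.Countable) (hFc : Continuous F)
    (hF : HasCompactSupport F) (hd : ∀ ω ∉ s, HasDerivAt F (g ω) ω) (hg : Integrable g)
    {t : ℝ} (ht : t ≠ 0) :
    ∫ ω : ℝ, exp (-I * t * ω) • F ω = (I * t)⁻¹ • ∫ ω : ℝ, exp (-I * t * ω) • g ω := by
  have heF := (hFc.integrable_of_hasCompactSupport (μ := volume) hF).cexp_neg_I_mul_smul t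
  have heg := hg.cexp_neg_I_mul_smul t
  have hIt : I * t ≠ 0 := mul_ne_zero I_ne_zero (ofReal_ne_zero.mpr ht)
  have hprod : ∫ ω : ℝ, (exp (-I * t * ω) • g ω + (-I * t) • exp (-I * t * ω) • F ω) = 0 :=
    integral_eq_zero_of_hasDerivAt_off_countable (h := fun ω => exp (-I * t * ω) • F ω) hs
      (by fun_prop) hF.smul_left
      (fun ω hω => ((hasDerivAt_cexp_neg_I_mul t ω).smul (hd ω hω)).congr_deriv
        (by rw [mul_smul]))
      (heg.add (heF.smul _))
  rw [integral_add (g := fun ω : ℝ => (-I * t) • exp (-I * t * ω) • F ω) heg (heF.smul _),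
    integral_smul, add_eq_zero_iff_eq_neg, ← neg_smul] at hprod
  rw [hprod, show -(-I * t) = I * t by ring, inv_smul_smul₀ hIt]

end Fourier

theorem stmt17_general {B : Type*} [NormedAddCommGroup B] [NormedSpace ℂ B] [CompleteSpace B]
    (a b : ℝ) (F F' : ℝ → B)
    (hFc : Continuous F)
    (hsupp : ∀ ω : ℝ, ω ∉ Icc a b → F ω = 0)
    (hd : ∀ ω ∈ Ioo a b, HasDerivAt F (F' ω) ω)
    (hint : IntegrableOn F' (Ioo a b)) :
    Integrable ((Ioo a b).indicator F') ∧
    (∀ x y : ℝ, F y - F x = ∫ ω in x..y, (Ioo a b).indicator F' ω) ∧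
    ∀ t : ℝ, t ≠ 0 →
      ∫ ω : ℝ, Complex.exp (-Complex.I * t * ω) • F ω =
        (Complex.I * t)⁻¹ •
          ∫ ω : ℝ, Complex.exp (-Complex.I * t * ω) • (Ioo a b).indicator F' ω := by
  have hg : Integrable ((Ioo a b).indicator F') :=
    (integrable_indicator_iff measurableSet_Ioo).2 hint
  have hpair : ({a, b} : Set ℝ).Countable := (toFinite _).countable
  have hderiv : ∀ ω ∉ ({a, b} : Set ℝ), HasDerivAt F ((Ioo a b).indicator F' ω) ω :=
    fun _ => hasDerivAt_indicator_Ioo_of_notMem_pair hsupp hd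
  refine ⟨hg, fun x y => ?_, fun t ht => ?_⟩
  · exact (integral_eq_of_hasDerivAt_off_countable F _ hpair hFc.continuousOn
      (fun ω hω => hderiv ω hω.2) hg.intervalIntegrable).symm
  · exact integral_cexp_neg_I_mul_smul_eq_inv_smul_of_hasDerivAt_off_countable hpair hFc
      (.intro isCompact_Icc hsupp) hderiv hg ht

/-- First integration by parts in the Jensen–Kato lemma: if `F` is continuous, supported in
`[a,b]` with `F(a) = F(b) = 0`, differentiable on `(a,b)` with `‖F'(ω)‖ ≤ M(ω−a)^{−1/2}` near `a`
and `F'` integrable on `(a,b)`, then the zero-extension of `F` is absolutely continuous with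
derivative `g = 𝟙_{(a,b)} F' ∈ L¹(ℝ; B)` and
`∫ e^{−itω} F(ω) dω = (it)^{−1} ∫ e^{−itω} g(ω) dω` for `t ≠ 0`. -/
theorem stmt17 {B : Type*} [NormedAddCommGroup B] [NormedSpace ℂ B] [CompleteSpace B]
    (a b : ℝ) (hab : a < b) (F F' : ℝ → B) (M : ℝ)
    (hFc : Continuous F)
    (hsupp : ∀ ω : ℝ, ω ∉ Icc a b → F ω = 0)
    (hFa : F a = 0) (hFb : F b = 0)
    (hd : ∀ ω ∈ Ioo a b, HasDerivAt F (F' ω) ω)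
    (hM : ∃ c : ℝ, a < c ∧ c ≤ b ∧ ∀ ω ∈ Ioo a c, ‖F' ω‖ ≤ M * (ω - a) ^ (-(1 / 2) : ℝ))
    (hint : IntegrableOn F' (Ioo a b)) :
    Integrable ((Ioo a b).indicator F') ∧
    (∀ x y : ℝ, F y - F x = ∫ ω in x..y, (Ioo a b).indicator F' ω) ∧
    ∀ t : ℝ, t ≠ 0 →
      ∫ ω : ℝ, Complex.exp (-Complex.I * t * ω) • F ω =
        (Complex.I * t)⁻¹ •
          ∫ ω : ℝ, Complex.exp (-Complex.I * t * ω) • (Ioo a b).indicator F' ω :=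
  stmt17_general a b F F' hFc hsupp hd hint
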